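/- If ν is an h'-complete numbering (h' the jump of h), then the map μ ↦ G(μ, ν, h) is a closure operator on numberings of S with respect to the preorder ≤^h of h-computable reducibility: it is monotone, μ ≤^h G(μ,ν,h), and G(G(μ,ν,h), ν, h) ≤^h G(μ,ν,h). -/

import Mathlib

/-- Relativized partial recursiveness: `f` is partial recursive in the (total) oracle `O`. -/
inductive RecursiveInFn (O : ℕ → ℕ) : (ℕ →. ℕ) → Prop
  | oracle : RecursiveInFn O O
  | zero : RecursiveInFn O (pure 0)
  | succ : RecursiveInFn O Nat.succ
  | left : RecursiveInFn O ↑fun n : ℕ => n.unpair.1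
  | right : RecursiveInFn O ↑fun n : ℕ => n.unpair.2
  | pair {f g} : RecursiveInFn O f → RecursiveInFn O g →
      RecursiveInFn O fun n => Nat.pair <$> f n <*> g n
  | comp {f g} : RecursiveInFn O f → RecursiveInFn O g → RecursiveInFn O fun n => g n >>= f
  | prec {f g} : RecursiveInFn O f → RecursiveInFn O g → RecursiveInFn O (Nat.unpaired fun a n =>
      n.rec (f a) fun y IH => do let i ← IH; g (Nat.pair a (Nat.pair y i)))
  | rfind {f} : RecursiveInFn O f →
      RecursiveInFn O fun a => Nat.rfind fun n => (fun m => m = 0) <$> f (Nat.pair a n)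

/-- Computable (many-one style) reducibility between numberings. -/
def NumRed {S : Type*} (μ ν : ℕ → S) : Prop :=
  ∃ f : ℕ → ℕ, Computable f ∧ ∀ n, μ n = ν (f n)

/-- Reducibility between numberings via an `O`-computable total function. -/
def NumRedIn {S : Type*} (O : ℕ → ℕ) (μ ν : ℕ → S) : Prop :=
  ∃ f : ℕ → ℕ, RecursiveInFn O ↑f ∧ ∀ n, μ n = ν (f n)

/-- The join `μ ⊕ ν` of two numberings. -/
def NumJoin {S : Type*} (μ ν : ℕ → S) : ℕ → S :=
  fun n => if n % 2 = 0 then μ (n / 2) else ν (n / 2)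

/-- `ν` is `O`-precomplete: every `O`-partial computable function has a total
computable `ν`-totalizer. -/
def Precomplete {S : Type*} (O : ℕ → ℕ) (ν : ℕ → S) : Prop :=
  ∀ ψ : ℕ →. ℕ, RecursiveInFn O ψ →
    ∃ t : ℕ → ℕ, Computable t ∧ ∀ (x : ℕ) (hx : (ψ x).Dom), ν (t x) = ν ((ψ x).get hx)

/-- `ν` is `O`-complete with respect to `a`. -/
def CompleteAt {S : Type*} (O : ℕ → ℕ) (ν : ℕ → S) (a : S) : Prop :=
  ∀ ψ : ℕ →. ℕ, RecursiveInFn O ψ →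
    ∃ t : ℕ → ℕ, Computable t ∧ (∀ (x : ℕ) (hx : (ψ x).Dom), ν (t x) = ν ((ψ x).get hx)) ∧
      ∀ x : ℕ, ¬ (ψ x).Dom → ν (t x) = a

open Classical in
/-- The jump (halting problem) of a partial function `U`, as a 0-1 valued total function. -/
noncomputable def jumpOf (U : ℕ →. ℕ) : ℕ → ℕ :=
  fun x => if (U x).Dom then 1 else 0

open Classical in
/-- The operation `G(μ,ν,h)` defined from a universal `h`-partial computable function `U`:
`G⟨n,x⟩ = ν n` if `U x` diverges and `μ (U x)` if it converges. -/
noncomputable def GOp {S : Type*} (μ ν : ℕ → S) (U : ℕ →. ℕ) : ℕ → S :=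
  fun m =>
    if hd : (U (Nat.unpair m).2).Dom then μ ((U (Nat.unpair m).2).get hd)
    else ν (Nat.unpair m).1

/-! Monotonicity and `μ ≤ G μ` only use that `U` is universal: a reduction `f` of `μ` to `μ₁` is
moved inside `G` through an index of `x ↦ f (U x)`, and `μ ≤ G μ` through an index of the identity.
For `G (G μ) ≤ G μ`, send `⟨n, x⟩` to `⟨t ⟨n, x⟩, ⟨e, ⟨n, x⟩⟩⟩`, where `e` is an index of the double
lookup `⟨n, x⟩ ↦ U (U x).2` and `t` is a `ν`-totalizer of the index at which `G (G μ)` falls back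
to `ν`: `n` if `U x` diverges, `(U x).1` otherwise. This fallback index is computable only in the
jump, and `h'`-completeness of `ν` is what replaces it by a computable `t`. -/

namespace RecursiveInFn

variable {O : ℕ → ℕ}

theorem of_eq {f g : ℕ →. ℕ} (hf : RecursiveInFn O f) (H : ∀ n, f n = g n) :
    RecursiveInFn O g :=
  (funext H : f = g) ▸ hf

theorem of_partrec {f : ℕ →. ℕ} (hf : Nat.Partrec f) : RecursiveInFn O f := by
  induction hf with
  | zero => exact zero
  | succ => exact succ
  | left => exact left
  | right => exact right
  | pair _ _ pf pg => exact pair pf pg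
  | comp _ _ pf pg => exact comp pf pg
  | prec _ _ pf pg => exact prec pf pg
  | rfind _ pf => exact rfind pf

theorem of_computable {f : ℕ → ℕ} (hf : Computable f) : RecursiveInFn O ↑f :=
  of_partrec (Partrec.nat_iff.mp hf)

theorem subst {O' : ℕ → ℕ} {f : ℕ →. ℕ} (hf : RecursiveInFn O' f) (hO' : RecursiveInFn O ↑O') :
    RecursiveInFn O f := by
  induction hf with
  | oracle => exact hO'
  | zero => exact zero
  | succ => exact succ
  | left => exact left
  | right => exact right
  | pair _ _ pf pg => exact pair pf pg
  | comp _ _ pf pg => exact comp pf pg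
  | prec _ _ pf pg => exact prec pf pg
  | rfind _ pf => exact rfind pf

theorem comp_total {f : ℕ →. ℕ} {g : ℕ → ℕ} (hf : RecursiveInFn O f) (hg : RecursiveInFn O ↑g) :
    RecursiveInFn O fun n => f (g n) :=
  (comp hf hg).of_eq fun _ => Part.bind_some _ _

theorem map {f : ℕ →. ℕ} {g : ℕ → ℕ} (hf : RecursiveInFn O f) (hg : RecursiveInFn O ↑g) :
    RecursiveInFn O fun n => (f n).map g :=
  (comp hg hf).of_eq fun _ => Part.bind_some_eq_map _ _

theorem ite_eq_zero {c f : ℕ → ℕ} {g : ℕ →. ℕ}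
    (hc : RecursiveInFn O ↑c) (hf : RecursiveInFn O ↑f) (hg : RecursiveInFn O g) :
    RecursiveInFn O fun n => if c n = 0 then Part.some (f n) else g n := by
  have hpair : RecursiveInFn O ↑fun n => Nat.pair n (c n) :=
    (pair (of_computable Computable.id) hc).of_eq fun n => by simp [Seq.seq, PFun.coe_val]
  -- past the first step the accumulator is `g a` itself, so binding it once more changes nothing
  have hrec : ∀ a k, Nat.unpaired (fun a n => n.rec ((f : ℕ →. ℕ) a) fun y IH => do
      let i ← IH; (fun p => g p.unpair.1) (Nat.pair a (Nat.pair y i))) (Nat.pair a k)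
      = if k = 0 then Part.some (f a) else g a := by
    intro a k
    induction k with
    | zero => simp [Nat.unpaired]
    | succ k ih =>
      simp only [Nat.unpaired, Nat.unpair_pair] at ih ⊢
      rw [ih]
      rcases k with _ | k
      · simp
      · simp only [if_neg k.succ_ne_zero, Part.bind_eq_bind]
        ext b
        simp only [Part.mem_bind_iff]
        exact ⟨fun ⟨_, _, hb⟩ => hb, fun hb => ⟨b, hb, hb⟩⟩
  exact (comp (prec hf (comp_total hg left)) hpair).of_eq fun n => by
    simp only [PFun.coe_val, Part.bind_eq_bind, Part.bind_some]
    exact hrec n (c n)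

end RecursiveInFn

theorem numRedIn_of_computable {S : Type*} {O : ℕ → ℕ} {μ ν : ℕ → S} {f : ℕ → ℕ}
    (hf : Computable f) (H : ∀ n, μ n = ν (f n)) : NumRedIn O μ ν :=
  ⟨f, RecursiveInFn.of_computable hf, H⟩

theorem CompleteAt.precomplete {S : Type*} {O : ℕ → ℕ} {ν : ℕ → S} {a : S}
    (hν : CompleteAt O ν a) : Precomplete O ν :=
  fun ψ hψ => (hν ψ hψ).imp fun _ ⟨ht, htψ, _⟩ => ⟨ht, htψ⟩

theorem Precomplete.exists_totalizer {S : Type*} {O : ℕ → ℕ} {ν : ℕ → S}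
    (hν : Precomplete O ν) {ψ : ℕ →. ℕ} (hψ : RecursiveInFn O ψ) :
    ∃ t : ℕ → ℕ, Computable t ∧ ∀ x a, ψ x = Part.some a → ν (t x) = ν a := by
  obtain ⟨t, ht, htψ⟩ := hν ψ hψ
  refine ⟨t, ht, fun x a hx => ?_⟩
  rw [htψ x (hx ▸ trivial)]
  exact congrArg ν (Part.get_eq_iff_eq_some.mpr hx)

section GOp

variable {S : Type*} {μ ν : ℕ → S} {U : ℕ →. ℕ}

theorem GOp_pair_of_eq_some {x v : ℕ} (hx : U x = Part.some v) (n : ℕ) :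
    GOp μ ν U (Nat.pair n x) = μ v := by
  simp [GOp, hx]

theorem GOp_pair_of_eq_none {x : ℕ} (hx : U x = Part.none) (n : ℕ) :
    GOp μ ν U (Nat.pair n x) = ν n := by
  simp [GOp, hx]

theorem numRedIn_GOp_of_numRedIn {h : ℕ → ℕ} (hU : RecursiveInFn h U)
    (huniv : ∀ ψ : ℕ →. ℕ, RecursiveInFn h ψ → ∃ e : ℕ, ∀ x, ψ x = U (Nat.pair e x))
    {μ₁ : ℕ → S} (hμ : NumRedIn h μ μ₁) : NumRedIn h (GOp μ ν U) (GOp μ₁ ν U) := by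
  obtain ⟨f, hf, hμf⟩ := hμ
  obtain ⟨e, he⟩ := huniv _ ((hU.comp_total .right).map hf)
  refine numRedIn_of_computable (f := fun m => Nat.pair m.unpair.1 (Nat.pair e m))
    (Primrec₂.natPair.comp (Primrec.fst.comp .unpair)
      (Primrec₂.natPair.comp (.const e) .id)).to_comp fun m => ?_
  conv_lhs => rw [← Nat.pair_unpair m]
  rcases (U m.unpair.2).eq_none_or_eq_some with hx | ⟨v, hx⟩
  · have he' : U (Nat.pair e m) = Part.none := by rw [← he, hx, Part.map_none]
    rw [GOp_pair_of_eq_none hx, GOp_pair_of_eq_none he']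
  · have he' : U (Nat.pair e m) = Part.some (f v) := by rw [← he, hx, Part.map_some]
    rw [GOp_pair_of_eq_some hx, GOp_pair_of_eq_some he', hμf]

theorem numRedIn_GOp_self {h : ℕ → ℕ}
    (huniv : ∀ ψ : ℕ →. ℕ, RecursiveInFn h ψ → ∃ e : ℕ, ∀ x, ψ x = U (Nat.pair e x)) :
    NumRedIn h μ (GOp μ ν U) := by
  obtain ⟨e, he⟩ := huniv _ (RecursiveInFn.of_computable Computable.id)
  refine numRedIn_of_computable (f := fun n => Nat.pair 0 (Nat.pair e n))
    (Primrec₂.natPair.comp (.const 0) (Primrec₂.natPair.comp (.const e) .id)).to_comp fun n => ?_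
  rw [GOp_pair_of_eq_some (he n).symm]
  rfl

noncomputable def GOpFallback (U : ℕ →. ℕ) : ℕ →. ℕ :=
  fun m => if jumpOf U m.unpair.2 = 0 then Part.some m.unpair.1
    else (U m.unpair.2).map fun v => v.unpair.1

theorem GOpFallback_of_eq_none {m : ℕ} (hx : U m.unpair.2 = Part.none) :
    GOpFallback U m = Part.some m.unpair.1 := by
  simp [GOpFallback, jumpOf, hx]

theorem GOpFallback_of_eq_some {m v : ℕ} (hx : U m.unpair.2 = Part.some v) :
    GOpFallback U m = Part.some v.unpair.1 := by
  simp [GOpFallback, jumpOf, hx]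

theorem recursiveInFn_GOpFallback {h : ℕ → ℕ} (hU : RecursiveInFn h U)
    (hh : RecursiveInFn (jumpOf U) ↑h) : RecursiveInFn (jumpOf U) (GOpFallback U) :=
  RecursiveInFn.ite_eq_zero (c := fun m => jumpOf U m.unpair.2)
    (RecursiveInFn.comp_total (f := ↑(jumpOf U)) .oracle .right) .left (((hU.subst hh).comp_total .right).map .left)

theorem numRedIn_GOp_GOp {h : ℕ → ℕ} (hU : RecursiveInFn h U)
    (huniv : ∀ ψ : ℕ →. ℕ, RecursiveInFn h ψ → ∃ e : ℕ, ∀ x, ψ x = U (Nat.pair e x))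
    (hh : RecursiveInFn (jumpOf U) ↑h) (hν : Precomplete (jumpOf U) ν) :
    NumRedIn h (GOp (GOp μ ν U) ν U) (GOp μ ν U) := by
  obtain ⟨t, ht, htψ⟩ := hν.exists_totalizer (recursiveInFn_GOpFallback hU hh)
  have hUU := hU.comp_total RecursiveInFn.right
  obtain ⟨e, he⟩ := huniv _ (RecursiveInFn.comp hUU hUU)
  refine numRedIn_of_computable (f := fun m => Nat.pair (t m) (Nat.pair e m))
    (Primrec₂.natPair.to_comp.comp ht (Primrec₂.natPair.comp (.const e) .id).to_comp)
    fun m => ?_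
  conv_lhs => rw [← Nat.pair_unpair m]
  rcases (U m.unpair.2).eq_none_or_eq_some with hx | ⟨v, hx⟩
  · have he' : U (Nat.pair e m) = Part.none := by rw [← he, hx, Part.bind_eq_bind, Part.bind_none]
    rw [GOp_pair_of_eq_none hx, GOp_pair_of_eq_none he', htψ m _ (GOpFallback_of_eq_none hx)]
  · rw [GOp_pair_of_eq_some hx, ← Nat.pair_unpair v]
    rcases (U v.unpair.2).eq_none_or_eq_some with hy | ⟨w, hy⟩
    · have he' : U (Nat.pair e m) = Part.none := by rw [← he, hx, Part.bind_eq_bind, Part.bind_some, hy]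
      rw [GOp_pair_of_eq_none hy, GOp_pair_of_eq_none he', htψ m _ (GOpFallback_of_eq_some hx)]
    · have he' : U (Nat.pair e m) = Part.some w := by
        rw [← he, hx, Part.bind_eq_bind, Part.bind_some, hy]
      rw [GOp_pair_of_eq_some hy, GOp_pair_of_eq_some he']

end GOp

/-- if `ν` is `h'`-complete (`h' = jumpOf U` the jump of `h`, `U` the
universal `h`-partial computable function), then `μ ↦ G(μ,ν,h)` is a closure operator
on numberings of `S` with respect to `≤^h`: monotone, increasing, and idempotent-below. -/
theorem GOp_closureOperator {S : Type*} (h : ℕ → ℕ) (U : ℕ →. ℕ)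
    (hU : RecursiveInFn h U)
    (huniv : ∀ ψ : ℕ →. ℕ, RecursiveInFn h ψ → ∃ e : ℕ, ∀ x, ψ x = U (Nat.pair e x))
    (hh : RecursiveInFn (jumpOf U) ↑h)
    (ν : ℕ → S) (hcomp : ∃ s : S, CompleteAt (jumpOf U) ν s) :
    (∀ μ μ₁ : ℕ → S, NumRedIn h μ μ₁ → NumRedIn h (GOp μ ν U) (GOp μ₁ ν U)) ∧
      (∀ μ : ℕ → S, NumRedIn h μ (GOp μ ν U)) ∧
      (∀ μ : ℕ → S, NumRedIn h (GOp (GOp μ ν U) ν U) (GOp μ ν U)) := by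
  obtain ⟨s, hs⟩ := hcomp
  exact ⟨fun _ _ => numRedIn_GOp_of_numRedIn hU huniv, fun _ => numRedIn_GOp_self huniv,
    fun _ => numRedIn_GOp_GOp hU huniv hh hs.precomplete⟩
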